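/- If c_{i,a} ~ Beta((i+m−1)a/N, a − (i+m−1)a/N) (the case 1 ≤ i ≤ m of the Dirichlet aggregation), then E[log((m c_i/N)/c_{i,a})] = log((i+m−1)/N) − ψ(a(i+m−1)/N) + ψ(a), where c_i = (m+i−1)/m, and this quantity tends to 0 when N → ∞, m → ∞, m/N → 0 and a → ∞ with N/(am) → 0. -/

import Mathlib

/-!
Convexity of `log ∘ Γ` on `(0, ∞)` bounds its derivative `ψ` at `x` and `x + 1` by the slope
between these points, which is `log x` because `Γ (x + 1) = x Γ x`; hence
`log x - 1 / x ≤ ψ x ≤ log x` and `log x - ψ x → 0`.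
Differentiating `B(s, t) = ∫₀¹ x ^ (s - 1) (1 - x) ^ (t - 1) dx = Γ s Γ t / Γ (s + t)` in `s`
under the integral gives `E[log X] = ψ α - ψ (α + β)` for `X ~ Beta(α, β)`, which is the
expectation formula since `α + β = a`. The limit is `(log (a x) - ψ (a x)) - (log a - ψ a)`
with `x = (i + m - 1) / N`, and `a x ≥ a m / N → ∞`.
-/

open MeasureTheory ProbabilityTheory Real Filter

/-- The Beta(α, β) density on ℝ. -/
noncomputable def betaPDFReal (α β x : ℝ) : ℝ :=
  if 0 < x ∧ x < 1 then
    Real.Gamma (α + β) / (Real.Gamma α * Real.Gamma β) * x ^ (α - 1) * (1 - x) ^ (β - 1)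
  else 0

/-- The Beta(α, β) measure on ℝ. -/
noncomputable def betaMeasure (α β : ℝ) : Measure ℝ :=
  volume.withDensity fun x => ENNReal.ofReal (_root_.betaPDFReal α β x)

/-- The digamma function ψ = (log ∘ Γ)'. -/
noncomputable def digamma (x : ℝ) : ℝ := deriv (fun y => Real.log (Real.Gamma y)) x

/-- `J` is a Dirichlet(α₁, …, α_N) random vector under `μ`: it is obtained by
normalizing independent Gamma(αᵢ, 1) random variables. -/
def IsDirichlet {Ω : Type*} [MeasurableSpace Ω] (μ : Measure Ω) {N : ℕ}
    (J : Fin N → Ω → ℝ) (α : Fin N → ℝ) : Prop :=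
  ∃ G : Fin N → Ω → ℝ,
    iIndepFun G μ ∧
    (∀ i, Measurable (G i)) ∧
    (∀ i, Measure.map (G i) μ = gammaMeasure (α i) 1) ∧
    ∀ ω i, J i ω = G i ω / ∑ k, G k ω

open Set Topology
open scoped ENNReal

theorem log_Gamma_add_one {x : ℝ} (hx : 0 < x) :
    log (Gamma (x + 1)) = log x + log (Gamma x) := by
  rw [Gamma_add_one hx.ne', log_mul hx.ne' (Gamma_pos_of_pos hx).ne']

theorem hasDerivAt_log_Gamma {x : ℝ} (hx : 0 < x) :
    HasDerivAt (fun y => log (Gamma y)) (digamma x) x := by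
  have hΓ : DifferentiableAt ℝ Gamma x :=
    differentiableAt_Gamma fun m => ((neg_nonpos.mpr m.cast_nonneg).trans_lt hx).ne'
  exact (hΓ.log (Gamma_pos_of_pos hx).ne').hasDerivAt

theorem digamma_add_one {x : ℝ} (hx : 0 < x) : digamma (x + 1) = digamma x + x⁻¹ := by
  have shifted : HasDerivAt (fun y => log (Gamma (y + 1))) (digamma (x + 1)) x :=
    (hasDerivAt_log_Gamma (by linarith)).comp_add_const x 1
  have split : HasDerivAt (fun y => log y + log (Gamma y)) (x⁻¹ + digamma x) x :=
    (hasDerivAt_log hx.ne').add (hasDerivAt_log_Gamma hx)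
  have heq : (fun y => log (Gamma (y + 1))) =ᶠ[𝓝 x] fun y => log y + log (Gamma y) := by
    filter_upwards [eventually_gt_nhds hx] with y hy using log_Gamma_add_one hy
  rw [shifted.unique (split.congr_of_eventuallyEq heq), add_comm]

theorem slope_log_Gamma_add_one {x : ℝ} (hx : 0 < x) :
    slope (log ∘ Gamma) x (x + 1) = log x := by
  simp [slope_def_field, log_Gamma_add_one hx]

theorem digamma_le_log {x : ℝ} (hx : 0 < x) : digamma x ≤ log x :=
  slope_log_Gamma_add_one hx ▸ convexOn_log_Gamma.le_slope_of_hasDerivAt (mem_Ioi.mpr hx)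
    (mem_Ioi.mpr (by linarith)) (lt_add_one x) (hasDerivAt_log_Gamma hx)

theorem log_le_digamma_add_inv {x : ℝ} (hx : 0 < x) : log x ≤ digamma x + x⁻¹ :=
  digamma_add_one hx ▸ slope_log_Gamma_add_one hx ▸
    convexOn_log_Gamma.slope_le_of_hasDerivAt (mem_Ioi.mpr hx) (mem_Ioi.mpr (by linarith))
      (lt_add_one x) (hasDerivAt_log_Gamma (by linarith))

theorem tendsto_log_sub_digamma_atTop :
    Tendsto (fun x => log x - digamma x) atTop (𝓝 0) := by
  refine squeeze_zero' ?_ ?_ tendsto_inv_atTop_zero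
  · filter_upwards [eventually_gt_atTop 0] with x hx using sub_nonneg.2 (digamma_le_log hx)
  · filter_upwards [eventually_gt_atTop 0] with x hx
    linarith [log_le_digamma_add_inv hx]

theorem tendsto_log_sub_digamma_mul_add_digamma {ι : Type*} {l : Filter ι} {a x : ι → ℝ}
    (ha : Tendsto a l atTop) (hax : Tendsto (fun k => a k * x k) l atTop) :
    Tendsto (fun k => log (x k) - digamma (a k * x k) + digamma (a k)) l (𝓝 0) := by
  have hlim :=
    (tendsto_log_sub_digamma_atTop.comp hax).sub (tendsto_log_sub_digamma_atTop.comp ha)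
  rw [sub_zero] at hlim
  refine hlim.congr' ?_
  filter_upwards [ha.eventually_gt_atTop 0, hax.eventually_gt_atTop 0] with k hak haxk
  have hxk : 0 < x k := pos_of_mul_pos_right haxk hak.le
  simp only [Function.comp_apply, log_mul hak.ne' hxk.ne']
  ring

theorem ofReal_rpow_mul_one_sub_rpow {s t x : ℝ} (hx₀ : 0 ≤ x) (hx₁ : x ≤ 1) :
    ((x ^ (s - 1) * (1 - x) ^ (t - 1) : ℝ) : ℂ)
      = (x : ℂ) ^ ((s : ℂ) - 1) * (1 - (x : ℂ)) ^ ((t : ℂ) - 1) := by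
  rw [Complex.ofReal_mul, Complex.ofReal_cpow hx₀, Complex.ofReal_cpow (sub_nonneg.2 hx₁)]
  push_cast
  rfl

theorem integrableOn_Ioc_ofReal_rpow_mul_one_sub_rpow {s t : ℝ} (hs : 0 < s) (ht : 0 < t) :
    IntegrableOn (fun x : ℝ => ((x ^ (s - 1) * (1 - x) ^ (t - 1) : ℝ) : ℂ)) (Ioc 0 1) := by
  have h := Complex.betaIntegral_convergent (u := s) (v := t) (by simpa) (by simpa)
  rw [intervalIntegrable_iff_integrableOn_Ioc_of_le zero_le_one] at h
  exact h.congr_fun (fun x hx => (ofReal_rpow_mul_one_sub_rpow hx.1.le hx.2).symm)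
    measurableSet_Ioc

theorem integrableOn_rpow_mul_one_sub_rpow {s t : ℝ} (hs : 0 < s) (ht : 0 < t) :
    IntegrableOn (fun x : ℝ => x ^ (s - 1) * (1 - x) ^ (t - 1)) (Ioo 0 1) := by
  have h := (integrableOn_Ioc_ofReal_rpow_mul_one_sub_rpow hs ht).re
  simp only [RCLike.re_to_complex, Complex.ofReal_re] at h
  exact IntegrableOn.mono_set h Ioo_subset_Ioc_self

theorem integral_rpow_mul_one_sub_rpow {s t : ℝ} (hs : 0 < s) (ht : 0 < t) :
    ∫ x in Ioo 0 1, x ^ (s - 1) * (1 - x) ^ (t - 1) = beta s t := by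
  rw [beta_eq_betaIntegralReal s t hs ht, Complex.betaIntegral,
    intervalIntegral.integral_of_le zero_le_one, ← integral_Ioc_eq_integral_Ioo,
    ← setIntegral_congr_fun measurableSet_Ioc
      (fun x hx => ofReal_rpow_mul_one_sub_rpow (s := s) (t := t) hx.1.le hx.2),
    integral_complex_ofReal, Complex.ofReal_re]

theorem integrableOn_rpow_mul_one_sub_rpow_mul_log {s t : ℝ} (hs : 0 < s) (ht : 0 < t) :
    IntegrableOn (fun x : ℝ => x ^ (s - 1) * (1 - x) ^ (t - 1) * log x) (Ioo 0 1) := by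
  refine ((integrableOn_rpow_mul_one_sub_rpow (half_pos hs) ht).const_mul (2 / s)).mono'
    (by fun_prop) ((ae_restrict_iff' measurableSet_Ioo).2 (ae_of_all _ fun x ⟨hx₀, hx₁⟩ => ?_))
  -- `|log x| x ^ (s / 2) ≤ 2 / s` absorbs the logarithm into half of the power of `x`
  have hlog := (abs_log_mul_self_rpow_lt x (s / 2) hx₀ hx₁.le (half_pos hs)).le
  have hsplit : x ^ (s - 1) = x ^ (s / 2 - 1) * x ^ (s / 2) := by
    rw [← rpow_add hx₀]; ring_nf
  have h1x : 0 ≤ (1 - x) ^ (t - 1) := rpow_nonneg (by linarith) _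
  rw [one_div_div] at hlog
  rw [norm_eq_abs, hsplit]
  calc |x ^ (s / 2 - 1) * x ^ (s / 2) * (1 - x) ^ (t - 1) * log x|
      = x ^ (s / 2 - 1) * (1 - x) ^ (t - 1) * |log x * x ^ (s / 2)| := by
        rw [abs_mul, abs_mul, abs_mul, abs_mul, abs_of_pos (rpow_pos_of_pos hx₀ _),
          abs_of_pos (rpow_pos_of_pos hx₀ _), abs_of_nonneg h1x]; ring
    _ ≤ x ^ (s / 2 - 1) * (1 - x) ^ (t - 1) * (2 / s) := by gcongr
    _ = 2 / s * (x ^ (s / 2 - 1) * (1 - x) ^ (t - 1)) := by ring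

theorem hasDerivAt_integral_rpow_mul_one_sub_rpow {s t : ℝ} (hs : 0 < s) (ht : 0 < t) :
    HasDerivAt (fun σ => ∫ x in Ioo 0 1, x ^ (σ - 1) * (1 - x) ^ (t - 1))
      (∫ x in Ioo 0 1, x ^ (s - 1) * (1 - x) ^ (t - 1) * log x) s := by
  have hbound : ∀ᵐ x ∂volume.restrict (Ioo (0 : ℝ) 1), ∀ σ ∈ Metric.ball s (s / 2),
      ‖x ^ (σ - 1) * (1 - x) ^ (t - 1) * log x‖
        ≤ ‖x ^ (s / 2 - 1) * (1 - x) ^ (t - 1) * log x‖ := by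
    refine (ae_restrict_iff' measurableSet_Ioo).2 (ae_of_all _ fun x ⟨hx₀, hx₁⟩ σ hσ => ?_)
    have hσ' : s / 2 - 1 ≤ σ - 1 := by
      linarith [(abs_lt.1 (Real.dist_eq σ s ▸ Metric.mem_ball.1 hσ)).1]
    simp only [norm_mul, norm_eq_abs, abs_of_pos (rpow_pos_of_pos hx₀ _)]
    gcongr ?_ * _ * _
    exact rpow_le_rpow_of_exponent_ge hx₀ hx₁.le hσ'
  have hderiv : ∀ᵐ x ∂volume.restrict (Ioo (0 : ℝ) 1), ∀ σ ∈ Metric.ball s (s / 2),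
      HasDerivAt (fun σ => x ^ (σ - 1) * (1 - x) ^ (t - 1))
        (x ^ (σ - 1) * (1 - x) ^ (t - 1) * log x) σ := by
    refine (ae_restrict_iff' measurableSet_Ioo).2 (ae_of_all _ fun x ⟨hx₀, _⟩ σ _ => ?_)
    exact (((hasStrictDerivAt_const_rpow hx₀ (σ - 1)).hasDerivAt.comp_sub_const σ 1).mul_const
      ((1 - x) ^ (t - 1))).congr_deriv (by ring)
  exact (hasDerivAt_integral_of_dominated_loc_of_deriv_le
    (F := fun σ x => x ^ (σ - 1) * (1 - x) ^ (t - 1))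
    (F' := fun σ x => x ^ (σ - 1) * (1 - x) ^ (t - 1) * log x)
    (Metric.ball_mem_nhds s (half_pos hs))
    (Eventually.of_forall fun σ => by fun_prop) (integrableOn_rpow_mul_one_sub_rpow hs ht)
    (by fun_prop) hbound (integrableOn_rpow_mul_one_sub_rpow_mul_log (half_pos hs) ht).norm
    hderiv).2

theorem hasDerivAt_beta {s t : ℝ} (hs : 0 < s) (ht : 0 < t) :
    HasDerivAt (fun σ => beta σ t) ((digamma s - digamma (s + t)) * beta s t) s := by
  have hlog : HasDerivAt (fun σ => log (Gamma σ) + log (Gamma t) - log (Gamma (σ + t)))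
      (digamma s - digamma (s + t)) s :=
    ((hasDerivAt_log_Gamma hs).add_const _).sub
      ((hasDerivAt_log_Gamma (add_pos hs ht)).comp_add_const s t)
  have hbeta : ∀ σ, 0 < σ →
      exp (log (Gamma σ) + log (Gamma t) - log (Gamma (σ + t))) = beta σ t := fun σ hσ => by
    rw [exp_sub, exp_add, exp_log (Gamma_pos_of_pos hσ), exp_log (Gamma_pos_of_pos ht),
      exp_log (Gamma_pos_of_pos (add_pos hσ ht)), beta]
  have h := hlog.exp
  rw [hbeta s hs, mul_comm] at h
  refine h.congr_of_eventuallyEq ?_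
  filter_upwards [eventually_gt_nhds hs] with σ hσ using (hbeta σ hσ).symm

theorem integral_rpow_mul_one_sub_rpow_mul_log {s t : ℝ} (hs : 0 < s) (ht : 0 < t) :
    ∫ x in Ioo 0 1, x ^ (s - 1) * (1 - x) ^ (t - 1) * log x
      = (digamma s - digamma (s + t)) * beta s t := by
  refine (hasDerivAt_integral_rpow_mul_one_sub_rpow hs ht).unique ?_
  refine (hasDerivAt_beta hs ht).congr_of_eventuallyEq ?_
  filter_upwards [eventually_gt_nhds hs] with σ hσ using integral_rpow_mul_one_sub_rpow hσ ht

theorem betaMeasure_eq_probabilityTheory_betaMeasure (α β : ℝ) :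
    _root_.betaMeasure α β = ProbabilityTheory.betaMeasure α β := by
  have hpdf : _root_.betaPDFReal α β = ProbabilityTheory.betaPDFReal α β := by
    ext x
    simp only [_root_.betaPDFReal, ProbabilityTheory.betaPDFReal, ProbabilityTheory.beta,
      one_div, inv_div]
  rw [_root_.betaMeasure, hpdf]
  rfl

namespace ProbabilityTheory

theorem ae_mem_Ioo_betaMeasure (α β : ℝ) : ∀ᵐ x ∂betaMeasure α β, x ∈ Ioo 0 1 := by
  rw [betaMeasure,
    ae_withDensity_iff (f := betaPDF α β) (measurable_betaPDFReal α β).ennreal_ofReal]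
  refine ae_of_all _ fun x hx => ?_
  by_contra h
  exact hx (by rw [betaPDF, betaPDFReal, if_neg (mt mem_Ioo.2 h), ENNReal.ofReal_zero])

theorem toNNReal_betaPDFReal_smul {α β : ℝ} (hα : 0 < α) (hβ : 0 < β) (g : ℝ → ℝ) :
    (fun x => (betaPDFReal α β x).toNNReal • g x)
      = (Ioo 0 1).indicator
          fun x => (beta α β)⁻¹ * (x ^ (α - 1) * (1 - x) ^ (β - 1) * g x) := by
  ext x
  by_cases hx : x ∈ Ioo 0 1
  · rw [indicator_of_mem hx, NNReal.smul_def,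
      coe_toNNReal _ (betaPDFReal_pos hx.1 hx.2 hα hβ).le, betaPDFReal, if_pos (mem_Ioo.1 hx),
      smul_eq_mul]
    ring
  · rw [indicator_of_notMem hx, betaPDFReal, if_neg (mt mem_Ioo.2 hx), toNNReal_zero, zero_smul]

theorem betaMeasure_eq_withDensity_toNNReal (α β : ℝ) :
    betaMeasure α β = volume.withDensity fun x => ((betaPDFReal α β x).toNNReal : ℝ≥0∞) :=
  rfl

theorem integrable_betaMeasure {α β : ℝ} (hα : 0 < α) (hβ : 0 < β) {g : ℝ → ℝ}
    (hg : IntegrableOn (fun x => x ^ (α - 1) * (1 - x) ^ (β - 1) * g x) (Ioo 0 1)) :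
    Integrable g (betaMeasure α β) := by
  rw [betaMeasure_eq_withDensity_toNNReal, integrable_withDensity_iff_integrable_smul
    (measurable_betaPDFReal α β).real_toNNReal, toNNReal_betaPDFReal_smul hα hβ,
    integrable_indicator_iff measurableSet_Ioo]
  exact hg.const_mul _

theorem integral_betaMeasure {α β : ℝ} (hα : 0 < α) (hβ : 0 < β) (g : ℝ → ℝ) :
    ∫ x, g x ∂betaMeasure α β
      = (beta α β)⁻¹ * ∫ x in Ioo 0 1, x ^ (α - 1) * (1 - x) ^ (β - 1) * g x := by
  rw [betaMeasure_eq_withDensity_toNNReal, integral_withDensity_eq_integral_smul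
    (measurable_betaPDFReal α β).real_toNNReal, toNNReal_betaPDFReal_smul hα hβ,
    integral_indicator measurableSet_Ioo, integral_const_mul]

theorem integral_log_betaMeasure {α β : ℝ} (hα : 0 < α) (hβ : 0 < β) :
    ∫ x, log x ∂betaMeasure α β = digamma α - digamma (α + β) := by
  rw [integral_betaMeasure hα hβ, integral_rpow_mul_one_sub_rpow_mul_log hα hβ,
    mul_comm, mul_inv_cancel_right₀ (beta_pos hα hβ).ne']

theorem integral_log_div_betaMeasure {α β : ℝ} (hα : 0 < α) (hβ : 0 < β) {C : ℝ}
    (hC : C ≠ 0) :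
    ∫ x, log (C / x) ∂betaMeasure α β = log C - digamma α + digamma (α + β) := by
  have := isProbabilityMeasureBeta hα hβ
  have hlog : Integrable log (betaMeasure α β) :=
    integrable_betaMeasure hα hβ (integrableOn_rpow_mul_one_sub_rpow_mul_log hα hβ)
  calc ∫ x, log (C / x) ∂betaMeasure α β = ∫ x, (log C - log x) ∂betaMeasure α β := by
        refine integral_congr_ae ?_
        filter_upwards [ae_mem_Ioo_betaMeasure α β] with x hx using log_div hC hx.1.ne'
    _ = log C - digamma α + digamma (α + β) := by
        rw [integral_sub (integrable_const _) hlog, integral_const,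
          integral_log_betaMeasure hα hβ, probReal_univ, one_smul]
        ring

theorem integral_log_div_of_map_eq_betaMeasure {Ω : Type*} [MeasurableSpace Ω] {μ : Measure Ω}
    {c : Ω → ℝ} {α β : ℝ} (hα : 0 < α) (hβ : 0 < β) (hc : μ.map c = betaMeasure α β)
    {C : ℝ} (hC : C ≠ 0) :
    ∫ ω, log (C / c ω) ∂μ = log C - digamma α + digamma (α + β) := by
  have := isProbabilityMeasureBeta hα hβ
  have hcm : AEMeasurable c μ := .of_map_ne_zero (hc ▸ IsProbabilityMeasure.ne_zero _)
  rw [← integral_log_div_betaMeasure hα hβ hC, ← hc,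
    integral_map (f := fun x => log (C / x)) hcm
      (measurable_const.div measurable_id).log.aestronglyMeasurable]

end ProbabilityTheory

theorem tendsto_mul_add_sub_one_div_atTop {ι : Type*} {l : Filter ι} {N m i : ι → ℕ}
    {a : ι → ℝ}
    (hi : ∀ k, 1 ≤ i k ∧ i k ≤ m k) (hN : Tendsto (fun k => (N k : ℝ)) l atTop)
    (ha : Tendsto a l atTop) (hNam : Tendsto (fun k => (N k : ℝ) / (a k * m k)) l (𝓝 0)) :
    Tendsto (fun k => a k * (((i k : ℝ) + m k - 1) / N k)) l atTop := by
  have hi₁ (k : ι) : (1 : ℝ) ≤ i k := by exact_mod_cast (hi k).1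
  have hm₁ (k : ι) : (1 : ℝ) ≤ m k := by exact_mod_cast (hi k).1.trans (hi k).2
  have hpos : ∀ᶠ k in l, 0 < (N k : ℝ) / (a k * m k) := by
    filter_upwards [hN.eventually_gt_atTop 0, ha.eventually_gt_atTop 0] with k hNk hak
    exact div_pos hNk (mul_pos hak (by linarith [hm₁ k]))
  have ham : Tendsto (fun k => a k * m k / N k) l atTop := by
    simpa [Pi.inv_def, inv_div] using
      (tendsto_nhdsWithin_iff.2 ⟨hNam, hpos⟩).inv_tendsto_nhdsGT_zero
  refine tendsto_atTop_mono' l ?_ ham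
  filter_upwards [hN.eventually_gt_atTop 0, ha.eventually_gt_atTop 0] with k hNk hak
  rw [← mul_div_assoc]
  gcongr
  linarith [hi₁ k]

theorem stmt12_general {Ω : Type*} [MeasurableSpace Ω] (Pr : Measure Ω)
    (N m i : ℕ) (a : ℝ) (ha : 0 < a) (hmN : 2 * m < N)
    (hi1 : 1 ≤ i) (him : i ≤ m)
    (c : Ω → ℝ)
    (hc : Measure.map c Pr = _root_.betaMeasure (((i : ℝ) + m - 1) * a / N)
      (a - ((i : ℝ) + m - 1) * a / N))
    (Nseq mseq iseq : ℕ → ℕ) (aseq : ℕ → ℝ)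
    (hiseq : ∀ k, 1 ≤ iseq k ∧ iseq k ≤ mseq k)
    (hNseq : Tendsto (fun k => (Nseq k : ℝ)) atTop atTop)
    (haseq : Tendsto aseq atTop atTop)
    (hNamseq : Tendsto (fun k => (Nseq k : ℝ) / (aseq k * mseq k)) atTop (nhds 0)) :
    (∫ ω, Real.log ((m : ℝ) * (((m : ℝ) + i - 1) / m) / N / c ω) ∂Pr
      = Real.log (((i : ℝ) + m - 1) / N) - digamma (a * ((i : ℝ) + m - 1) / N) + digamma a) ∧
    Tendsto (fun k =>
        Real.log (((iseq k : ℝ) + mseq k - 1) / Nseq k)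
          - digamma (aseq k * ((iseq k : ℝ) + mseq k - 1) / Nseq k) + digamma (aseq k))
      atTop (nhds 0) := by
  have hi : (1 : ℝ) ≤ i := by exact_mod_cast hi1
  have him' : (i : ℝ) ≤ m := by exact_mod_cast him
  have hmN' : 2 * (m : ℝ) < N := by exact_mod_cast hmN
  have hpos : 0 < (i : ℝ) + m - 1 := by linarith
  have hlt : (i : ℝ) + m - 1 < N := by linarith
  have hN : (0 : ℝ) < N := hpos.trans hlt
  have hα : 0 < ((i : ℝ) + m - 1) * a / N := by positivity
  have hβ : 0 < a - ((i : ℝ) + m - 1) * a / N := by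
    rw [sub_pos, div_lt_iff₀ hN]
    nlinarith
  have hC : (m : ℝ) * (((m : ℝ) + i - 1) / m) / N = ((i : ℝ) + m - 1) / N := by
    rw [mul_div_cancel₀ _ (by linarith : (0 : ℝ) < m).ne']
    ring
  rw [betaMeasure_eq_probabilityTheory_betaMeasure] at hc
  refine ⟨?_, ?_⟩
  · rw [integral_log_div_of_map_eq_betaMeasure hα hβ hc (hC ▸ (div_pos hpos hN).ne'), hC,
      add_sub_cancel, mul_comm a]
  · simpa only [mul_div_assoc] using tendsto_log_sub_digamma_mul_add_digamma haseq
      (tendsto_mul_add_sub_one_div_atTop hiseq hNseq haseq hNamseq)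

/-- Case 1 ≤ i ≤ m: if c_{i,a} ~ Beta((i+m-1)a/N, a - (i+m-1)a/N) then, with
cᵢ = (m+i-1)/m, E[log((m cᵢ/N)/c_{i,a})] = log((i+m-1)/N) - ψ(a(i+m-1)/N) + ψ(a),
and this quantity tends to 0 when N → ∞, m → ∞, m/N → 0, a → ∞ and N/(am) → 0. -/
theorem stmt12 {Ω : Type*} [MeasurableSpace Ω] (Pr : Measure Ω) [IsProbabilityMeasure Pr]
    (N m i : ℕ) (a : ℝ) (ha : 0 < a) (hm : 0 < m) (hmN : 2 * m < N)
    (hi1 : 1 ≤ i) (him : i ≤ m)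
    (c : Ω → ℝ)
    (hc : Measure.map c Pr = _root_.betaMeasure (((i : ℝ) + m - 1) * a / N)
      (a - ((i : ℝ) + m - 1) * a / N))
    (Nseq mseq iseq : ℕ → ℕ) (aseq : ℕ → ℝ)
    (hiseq : ∀ k, 1 ≤ iseq k ∧ iseq k ≤ mseq k)
    (hNseq : Tendsto (fun k => (Nseq k : ℝ)) atTop atTop)
    (hmseq : Tendsto (fun k => (mseq k : ℝ)) atTop atTop)
    (hmNseq : Tendsto (fun k => (mseq k : ℝ) / Nseq k) atTop (nhds 0))
    (haseq : Tendsto aseq atTop atTop)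
    (hNamseq : Tendsto (fun k => (Nseq k : ℝ) / (aseq k * mseq k)) atTop (nhds 0)) :
    (∫ ω, Real.log ((m : ℝ) * (((m : ℝ) + i - 1) / m) / N / c ω) ∂Pr
      = Real.log (((i : ℝ) + m - 1) / N) - digamma (a * ((i : ℝ) + m - 1) / N) + digamma a) ∧
    Tendsto (fun k =>
        Real.log (((iseq k : ℝ) + mseq k - 1) / Nseq k)
          - digamma (aseq k * ((iseq k : ℝ) + mseq k - 1) / Nseq k) + digamma (aseq k))
      atTop (nhds 0) :=
  stmt12_general Pr N m i a ha hmN hi1 him c hc Nseq mseq iseq aseq hiseq hNseq haseq hNamseq
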